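/- With K, A, Λ, the basis b_1,…,b_N, the dual family b*_1,…,b*_N, and J := Σ_{i=1}^N b_i·b*_i as in the context: for all i, j ∈ {1,…,N}, the coefficient of b_j in the expansion of J·b_i in the basis b_1,…,b_N equals Tr(b_i·b*_j). That is, the transpose of the matrix of the multiplication-by-J endomorphism in the basis b_1,…,b_N is the matrix [Tr(b_i·b*_j)]_{i,j}. -/

import Mathlib

/-!
The duality `Λ (b i * bs j) = δᵢⱼ` makes `a ↦ Λ (a * bs j)` the `j`-th coordinate functional of `b`.
Reading the diagonal of the matrix of multiplication by `h` through these functionals gives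
`Tr h = Σ_k Λ (h * b k * bs k) = Λ (h * J)`. Hence both sides of the claim equal
`Λ (J * b i * bs j)`, by commutativity.
-/

open Finset

section DualFamily

variable {K A ι : Type*} [CommSemiring K] [Semiring A] [Algebra K A] [Fintype ι] [DecidableEq ι]
  (b : Module.Basis ι K A) (Λ : A →ₗ[K] K) {bs : ι → A}

theorem Module.Basis.repr_eq_apply_mul_of_dual
    (hdual : ∀ i j, Λ (b i * bs j) = if i = j then 1 else 0) (a : A) (j : ι) :
    b.repr a j = Λ (a * bs j) := by
  conv_rhs => rw [← b.sum_repr a]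
  simp_rw [sum_mul, map_sum, smul_mul_assoc, map_smul, hdual, smul_eq_mul, mul_ite, mul_one,
    mul_zero, sum_ite_eq' univ j, mem_univ, if_true]

theorem Module.Basis.trace_mulLeft_eq_apply_mul_sum_of_dual
    (hdual : ∀ i j, Λ (b i * bs j) = if i = j then 1 else 0) (h : A) :
    LinearMap.trace K A (LinearMap.mulLeft K h) = Λ (h * ∑ k, b k * bs k) := by
  rw [LinearMap.trace_eq_matrix_trace K b, Matrix.trace, mul_sum, map_sum]
  refine sum_congr rfl fun k _ => ?_
  rw [Matrix.diag, LinearMap.toMatrix_apply, LinearMap.mulLeft_apply,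
    b.repr_eq_apply_mul_of_dual Λ hdual, mul_assoc]

end DualFamily

theorem statement9_general {K : Type*} [Field K] {A : Type*} [CommRing A] [Algebra K A] {N : ℕ}
    (b : Module.Basis (Fin N) K A) (Λ : A →ₗ[K] K) (bs : Fin N → A)
    (hdual : ∀ i j, Λ (b i * bs j) = if i = j then 1 else 0)
    (J : A) (hJ : J = ∑ i, b i * bs i) :
    ∀ i j : Fin N,
      b.repr (J * b i) j = LinearMap.trace K A (LinearMap.mulLeft K (b i * bs j)) := by
  intro i j
  rw [b.repr_eq_apply_mul_of_dual Λ hdual, b.trace_mulLeft_eq_apply_mul_sum_of_dual Λ hdual, ← hJ]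
  ring_nf

theorem statement9 {K : Type*} [Field K] {A : Type*} [CommRing A] [Algebra K A]
    [FiniteDimensional K A] {N : ℕ} (hN : Module.finrank K A = N)
    (b : Module.Basis (Fin N) K A) (Λ : A →ₗ[K] K) (bs : Fin N → A)
    (hdual : ∀ i j, Λ (b i * bs j) = if i = j then 1 else 0)
    (J : A) (hJ : J = ∑ i, b i * bs i) :
    ∀ i j : Fin N,
      b.repr (J * b i) j = LinearMap.trace K A (LinearMap.mulLeft K (b i * bs j)) :=
  statement9_general b Λ bs hdual J hJ
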